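/- Let T > 0 and c ∈ ℝ with 0 < |c| < T²/4. For y ∈ ℝ with |y| ≥ T/2, define f_y : [0,T] → ℝ by f_y(x) = y − sgn(y)·√((x − T/2)² + y² − T²/4). Then there exists a unique y_C ∈ ℝ with |y_C| ≥ T/2 such that ∫₀^T f_{y_C}(x) dx = c; moreover this y_C satisfies |y_C| > T/2 and sgn(y_C) = sgn(c), and f_{y_C} is Lipschitz with Lipschitz constant strictly less than 1. -/

import Mathlib

/-!
For `y > 0` the integrand is `y - √(y² - x(T - x)) = x(T - x) / (y + √(y² - x(T - x)))`, which
on `(0, T)` is positive, strictly decreasing in `y` and at most `T² / (4y)`. Hence the area is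
continuous and strictly decreasing on `[T/2, ∞)`, equals `T²/4` at `y = T/2` and is at most
`T³/(4y)`, so the intermediate value theorem yields `y_C`. The area is odd in `y`, which handles
`c < 0` and excludes solutions of the wrong sign.
-/

open MeasureTheory Set

/-- The hyperbola-arc function with vertex ordinate `y`, joining `(0,0)` to `(T,0)`. -/
noncomputable def hyperbolaFun (T y : ℝ) (x : ℝ) : ℝ :=
  y - Real.sign y * Real.sqrt ((x - T/2)^2 + y^2 - T^2/4)

theorem mul_sub_le_sq_div_four (T x : ℝ) : x * (T - x) ≤ T ^ 2 / 4 := by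
  nlinarith [sq_nonneg (x - T / 2)]

section SqrtSub

variable {a y : ℝ}

theorem sub_sqrt_sq_sub_eq_div (hy : 0 < y) (ha : a ≤ y ^ 2) :
    y - √(y ^ 2 - a) = a / (y + √(y ^ 2 - a)) := by
  have hpos : 0 < y + √(y ^ 2 - a) := by positivity
  rw [eq_div_iff hpos.ne']
  linear_combination (-1 : ℝ) * Real.sq_sqrt (sub_nonneg.2 ha)

theorem sub_sqrt_sq_sub_pos (ha : 0 < a) (hy : 0 < y) (hay : a ≤ y ^ 2) :
    0 < y - √(y ^ 2 - a) := by
  rw [sub_sqrt_sq_sub_eq_div hy hay]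
  positivity

theorem sub_sqrt_sq_sub_le_div (ha : 0 ≤ a) (hy : 0 < y) (hay : a ≤ y ^ 2) :
    y - √(y ^ 2 - a) ≤ a / y := by
  rw [sub_sqrt_sq_sub_eq_div hy hay]
  exact div_le_div_of_nonneg_left ha hy (le_add_of_nonneg_right (Real.sqrt_nonneg _))

theorem sub_sqrt_sq_sub_lt_of_lt {y' : ℝ} (ha : 0 < a) (hy : 0 < y) (hay : a ≤ y ^ 2)
    (hyy' : y < y') : y' - √(y' ^ 2 - a) < y - √(y ^ 2 - a) := by
  have hy' : 0 < y' := hy.trans hyy'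
  have hay' : a ≤ y' ^ 2 := hay.trans (by nlinarith)
  rw [sub_sqrt_sq_sub_eq_div hy hay, sub_sqrt_sq_sub_eq_div hy' hay']
  refine div_lt_div_of_pos_left ha (by positivity) ?_
  exact add_lt_add_of_lt_of_le hyy' (Real.sqrt_le_sqrt (by nlinarith))

end SqrtSub

/-- The constant `r / √(r² + b)` is the largest slope `|u| / √(u² + b)` of
`u ↦ √(u² + b)` on `|u| ≤ r`. -/
theorem abs_sqrt_sq_add_sub_sqrt_sq_add_le {r b u v : ℝ} (hb : 0 < b) (hu : |u| ≤ r)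
    (hv : |v| ≤ r) :
    |√(u ^ 2 + b) - √(v ^ 2 + b)| ≤ r / √(r ^ 2 + b) * |u - v| := by
  have hr : 0 ≤ r := (abs_nonneg u).trans hu
  set K := r / √(r ^ 2 + b)
  have habs_le : ∀ w, |w| ≤ r → |w| ≤ K * √(w ^ 2 + b) := by
    intro w hw
    rw [div_mul_eq_mul_div, le_div_iff₀ (by positivity),
      ← pow_le_pow_iff_left₀ (by positivity) (by positivity) two_ne_zero, mul_pow, mul_pow,
      Real.sq_sqrt (by positivity), Real.sq_sqrt (by positivity), sq_abs]
    have : w ^ 2 ≤ r ^ 2 := by rw [← sq_abs]; gcongr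
    nlinarith
  have hsum : 0 < √(u ^ 2 + b) + √(v ^ 2 + b) := by positivity
  have hprod : (√(u ^ 2 + b) - √(v ^ 2 + b)) * (√(u ^ 2 + b) + √(v ^ 2 + b))
      = (u + v) * (u - v) := by
    linear_combination Real.sq_sqrt (by positivity : 0 ≤ u ^ 2 + b)
      - Real.sq_sqrt (by positivity : 0 ≤ v ^ 2 + b)
  rw [← mul_le_mul_iff_left₀ hsum, ← abs_of_pos hsum, ← abs_mul, hprod, abs_mul,
    abs_of_pos hsum]
  calc |u + v| * |u - v| ≤ (|u| + |v|) * |u - v| := by gcongr; exact abs_add_le u v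
    _ ≤ (K * √(u ^ 2 + b) + K * √(v ^ 2 + b)) * |u - v| := by
        gcongr
        exacts [habs_le u hu, habs_le v hv]
    _ = K * |u - v| * (√(u ^ 2 + b) + √(v ^ 2 + b)) := by ring

section Hyperbola

variable {T y : ℝ}

theorem hyperbolaFun_neg (T y x : ℝ) : hyperbolaFun T (-y) x = -hyperbolaFun T y x := by
  simp only [hyperbolaFun, Real.sign_neg, neg_sq]
  ring

theorem continuous_hyperbolaFun (T y : ℝ) : Continuous (hyperbolaFun T y) := by
  unfold hyperbolaFun
  fun_prop

theorem hyperbolaFun_of_pos (hy : 0 < y) (x : ℝ) :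
    hyperbolaFun T y x = y - √(y ^ 2 - x * (T - x)) := by
  rw [hyperbolaFun, Real.sign_of_pos hy, one_mul]
  ring_nf

theorem hyperbolaFun_half (hT : 0 < T) (x : ℝ) :
    hyperbolaFun T (T / 2) x = T / 2 - |x - T / 2| := by
  rw [hyperbolaFun, Real.sign_of_pos (half_pos hT), one_mul,
    show (x - T / 2) ^ 2 + (T / 2) ^ 2 - T ^ 2 / 4 = (x - T / 2) ^ 2 by ring, Real.sqrt_sq_eq_abs]

theorem lipschitzOnWith_hyperbolaFun (hT : 0 ≤ T) (hy : T / 2 < |y|) :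
    LipschitzOnWith (T / (2 * |y|)).toNNReal (hyperbolaFun T y) (Icc 0 T) := by
  have hb : 0 < y ^ 2 - T ^ 2 / 4 := by
    rw [← sq_abs y]; nlinarith
  have hK : T / 2 / √((T / 2) ^ 2 + (y ^ 2 - T ^ 2 / 4)) = T / (2 * |y|) := by
    rw [show (T / 2) ^ 2 + (y ^ 2 - T ^ 2 / 4) = y ^ 2 by ring, Real.sqrt_sq_eq_abs, div_div]
  have hmem : ∀ x ∈ Icc 0 T, |x - T / 2| ≤ T / 2 := fun x hx ↦
    abs_sub_le_iff.2 ⟨by linarith [hx.2], by linarith [hx.1]⟩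
  have hsign : |Real.sign y| ≤ 1 := by
    rcases Real.sign_apply_eq y with h | h | h <;> simp [h]
  refine LipschitzOnWith.of_dist_le_mul fun x₁ hx₁ x₂ hx₂ ↦ ?_
  rw [Real.coe_toNNReal _ (by positivity), Real.dist_eq, Real.dist_eq, ← hK]
  calc |hyperbolaFun T y x₁ - hyperbolaFun T y x₂|
      = |Real.sign y| * |√((x₂ - T / 2) ^ 2 + (y ^ 2 - T ^ 2 / 4))
          - √((x₁ - T / 2) ^ 2 + (y ^ 2 - T ^ 2 / 4))| := by
        rw [← abs_mul]; congr 1; simp only [hyperbolaFun, add_sub_assoc]; ring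
    _ ≤ 1 * (T / 2 / √((T / 2) ^ 2 + (y ^ 2 - T ^ 2 / 4))
          * |x₂ - T / 2 - (x₁ - T / 2)|) := by
        gcongr
        exact abs_sqrt_sq_add_sub_sqrt_sq_add_le hb (hmem x₂ hx₂) (hmem x₁ hx₁)
    _ = _ := by rw [one_mul, sub_sub_sub_cancel_right, abs_sub_comm]

end Hyperbola

noncomputable def hyperbolaArea (T y : ℝ) : ℝ := ∫ x in (0 : ℝ)..T, hyperbolaFun T y x

section Area

variable {T y c : ℝ}

theorem hyperbolaArea_neg (T y : ℝ) : hyperbolaArea T (-y) = -hyperbolaArea T y := by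
  simp only [hyperbolaArea, hyperbolaFun_neg, intervalIntegral.integral_neg]

theorem hyperbolaArea_of_pos (hy : 0 < y) :
    hyperbolaArea T y = ∫ x in (0 : ℝ)..T, (y - √(y ^ 2 - x * (T - x))) := by
  simp only [hyperbolaArea, hyperbolaFun_of_pos hy]

theorem continuousOn_hyperbolaArea (T : ℝ) : ContinuousOn (hyperbolaArea T) (Ioi 0) := by
  have hcont : Continuous fun y ↦ ∫ x in (0 : ℝ)..T, (y - √(y ^ 2 - x * (T - x))) :=
    intervalIntegral.continuous_parametric_intervalIntegral_of_continuous' (by fun_prop) 0 T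
  exact hcont.continuousOn.congr fun y hy ↦ hyperbolaArea_of_pos hy

theorem hyperbolaArea_half (hT : 0 < T) : hyperbolaArea T (T / 2) = T ^ 2 / 4 := by
  have hint := continuous_hyperbolaFun T (T / 2)
  have hleft :
      ∫ x in (0 : ℝ)..T / 2, hyperbolaFun T (T / 2) x = ∫ x in (0 : ℝ)..T / 2, x := by
    refine intervalIntegral.integral_congr fun x hx ↦ ?_
    rw [uIcc_of_le (by linarith)] at hx
    rw [hyperbolaFun_half hT, abs_of_nonpos (by linarith [hx.2])]
    ring
  have hright : ∫ x in T / 2..T, hyperbolaFun T (T / 2) x = ∫ x in T / 2..T, (T - x) := by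
    refine intervalIntegral.integral_congr fun x hx ↦ ?_
    rw [uIcc_of_le (by linarith)] at hx
    rw [hyperbolaFun_half hT, abs_of_nonneg (by linarith [hx.1])]
    ring
  rw [hyperbolaArea, ← intervalIntegral.integral_add_adjacent_intervals
    (hint.intervalIntegrable 0 (T / 2)) (hint.intervalIntegrable (T / 2) T), hleft, hright,
    intervalIntegral.integral_comp_sub_left (fun x ↦ x), integral_id, integral_id]
  ring

theorem hyperbolaArea_pos (hT : 0 < T) (hy : T / 2 ≤ y) : 0 < hyperbolaArea T y := by
  have hy0 : 0 < y := by linarith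
  refine intervalIntegral.intervalIntegral_pos_of_pos_on
    ((continuous_hyperbolaFun T y).intervalIntegrable 0 T) (fun x hx ↦ ?_) hT
  rw [hyperbolaFun_of_pos hy0]
  exact sub_sqrt_sq_sub_pos (mul_pos hx.1 (sub_pos.2 hx.2)) hy0
    ((mul_sub_le_sq_div_four T x).trans (by nlinarith))

theorem hyperbolaArea_le (hT : 0 < T) (hy : T / 2 ≤ y) :
    hyperbolaArea T y ≤ T ^ 3 / (4 * y) := by
  have hy0 : 0 < y := by linarith
  have hbound : ∀ x ∈ Icc 0 T, hyperbolaFun T y x ≤ T ^ 2 / (4 * y) := by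
    intro x hx
    have hle := mul_sub_le_sq_div_four T x
    rw [hyperbolaFun_of_pos hy0]
    calc y - √(y ^ 2 - x * (T - x)) ≤ x * (T - x) / y :=
          sub_sqrt_sq_sub_le_div (mul_nonneg hx.1 (sub_nonneg.2 hx.2)) hy0
            (hle.trans (by nlinarith))
      _ ≤ T ^ 2 / 4 / y := by gcongr
      _ = T ^ 2 / (4 * y) := by rw [div_div]
  calc hyperbolaArea T y ≤ ∫ _ in (0 : ℝ)..T, T ^ 2 / (4 * y) :=
        intervalIntegral.integral_mono_on hT.le
          ((continuous_hyperbolaFun T y).intervalIntegrable 0 T) intervalIntegrable_const hbound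
    _ = T ^ 3 / (4 * y) := by
        rw [intervalIntegral.integral_const, smul_eq_mul]; ring

theorem strictAntiOn_hyperbolaArea (hT : 0 < T) : StrictAntiOn (hyperbolaArea T) (Ici (T / 2)) := by
  intro y₁ hy₁ y₂ hy₂ hlt
  have hy₁0 : 0 < y₁ := by linarith [mem_Ici.1 hy₁]
  rw [← sub_pos, hyperbolaArea, hyperbolaArea, ← intervalIntegral.integral_sub
    ((continuous_hyperbolaFun T y₁).intervalIntegrable 0 T)
    ((continuous_hyperbolaFun T y₂).intervalIntegrable 0 T)]
  refine intervalIntegral.intervalIntegral_pos_of_pos_on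
    (((continuous_hyperbolaFun T y₁).sub (continuous_hyperbolaFun T y₂)).intervalIntegrable 0 T)
    (fun x hx ↦ ?_) hT
  rw [sub_pos, hyperbolaFun_of_pos hy₁0, hyperbolaFun_of_pos (hy₁0.trans hlt)]
  exact sub_sqrt_sq_sub_lt_of_lt (mul_pos hx.1 (sub_pos.2 hx.2)) hy₁0
    ((mul_sub_le_sq_div_four T x).trans (by nlinarith [mem_Ici.1 hy₁])) hlt

theorem exists_unique_hyperbolaArea_eq_of_pos (hT : 0 < T) (hc0 : 0 < c) (hc : c < T ^ 2 / 4) :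
    ∃ y, T / 2 < y ∧ hyperbolaArea T y = c ∧
      ∀ y', T / 2 ≤ |y'| → hyperbolaArea T y' = c → y' = y := by
  set Y := T ^ 3 / (2 * c)
  have hY : T / 2 ≤ Y := by
    rw [le_div_iff₀ (by positivity)]; nlinarith
  have hAreaY : hyperbolaArea T Y < c := by
    calc hyperbolaArea T Y ≤ T ^ 3 / (4 * Y) := hyperbolaArea_le hT hY
      _ = c / 2 := by simp only [Y]; field_simp; ring
      _ < c := by linarith
  obtain ⟨y, hy, hAreay⟩ := intermediate_value_Icc' hY
    ((continuousOn_hyperbolaArea T).mono fun y hy ↦ (half_pos hT).trans_le hy.1)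
    ⟨hAreaY.le, (hyperbolaArea_half hT).symm ▸ hc.le⟩
  have hy_gt : T / 2 < y := by
    refine hy.1.lt_of_ne fun h ↦ ?_
    rw [← h, hyperbolaArea_half hT] at hAreay
    linarith
  refine ⟨y, hy_gt, hAreay, fun y' hy' hAreay' ↦ ?_⟩
  have hy'_pos : T / 2 ≤ y' := by
    refine (le_abs'.1 hy').resolve_left fun hneg ↦ ?_
    have := hyperbolaArea_pos hT (le_neg_of_le_neg hneg)
    rw [hyperbolaArea_neg] at this
    linarith
  exact (strictAntiOn_hyperbolaArea hT).injOn hy'_pos hy_gt.le (hAreay'.trans hAreay.symm)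

theorem exists_unique_hyperbolaArea_eq (hT : 0 < T) (hc0 : c ≠ 0) (hc : |c| < T ^ 2 / 4) :
    ∃ y, T / 2 < |y| ∧ Real.sign y = Real.sign c ∧ hyperbolaArea T y = c ∧
      ∀ y', T / 2 ≤ |y'| → hyperbolaArea T y' = c → y' = y := by
  rcases hc0.lt_or_gt with hneg | hpos
  · obtain ⟨y, hy, hArea, huniq⟩ :=
      exists_unique_hyperbolaArea_eq_of_pos hT (neg_pos.2 hneg) (abs_of_neg hneg ▸ hc)
    refine ⟨-y, ?_, ?_, ?_, fun y' hy' hArea' ↦ ?_⟩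
    · rwa [abs_neg, abs_of_pos (by linarith)]
    · rw [Real.sign_of_neg (by linarith), Real.sign_of_neg hneg]
    · rw [hyperbolaArea_neg, hArea, neg_neg]
    · rw [← huniq (-y') (by rwa [abs_neg]) (by rw [hyperbolaArea_neg, hArea']), neg_neg]
  · obtain ⟨y, hy, hArea, huniq⟩ :=
      exists_unique_hyperbolaArea_eq_of_pos hT hpos (abs_of_pos hpos ▸ hc)
    refine ⟨y, ?_, ?_, hArea, huniq⟩
    · rwa [abs_of_pos (by linarith)]
    · rw [Real.sign_of_pos (by linarith), Real.sign_of_pos hpos]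

end Area

/-- for `0 < |c| < T²/4` there is a unique `y_C` with `|y_C| ≥ T/2`
such that the hyperbola-arc `f_{y_C}` encloses area `c`; moreover `|y_C| > T/2`,
`sgn(y_C) = sgn(c)`, and `f_{y_C}` is Lipschitz of constant strictly less than 1. -/
theorem exists_unique_hyperbola (T c : ℝ) (hT : 0 < T) (hc0 : 0 < |c|)
    (hc : |c| < T^2 / 4) :
    ∃ yC : ℝ,
      (T/2 ≤ |yC| ∧ (∫ x in (0:ℝ)..T, hyperbolaFun T yC x) = c) ∧
      (∀ y : ℝ, T/2 ≤ |y| → (∫ x in (0:ℝ)..T, hyperbolaFun T y x) = c → y = yC) ∧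
      T/2 < |yC| ∧ Real.sign yC = Real.sign c ∧
      ∃ K : NNReal, (K : ℝ) < 1 ∧ LipschitzOnWith K (hyperbolaFun T yC) (Icc (0:ℝ) T) := by
  obtain ⟨y, hy, hsign, hArea, huniq⟩ := exists_unique_hyperbolaArea_eq hT (abs_pos.1 hc0) hc
  refine ⟨y, ⟨hy.le, hArea⟩, huniq, hy, hsign, (T / (2 * |y|)).toNNReal, ?_,
    lipschitzOnWith_hyperbolaFun hT.le hy⟩
  rw [Real.coe_toNNReal _ (by positivity), div_lt_one (by linarith)]
  linarith
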